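/- Let u be a unitary in O_2 and let α : O_2 → O_2 be a unital *-homomorphism with α(S_1) = uS_1 and α(S_2) = uS_2, such that α(F) ⊆ V. Then u ∈ V if and only if α(D_2) ⊆ D_2 and α(S_1S_2*) ∈ 𝒱_2. -/

import Mathlib

open scoped BigOperators

variable {A : Type*} [CStarAlgebra A] [PartialOrder A] [StarOrderedRing A]

/-- `Sw S μ = S_{μ_1} ⋯ S_{μ_k}`. -/
def Sw {n : ℕ} (S : Fin n → A) (μ : List (Fin n)) : A := (μ.map S).prod

/-- `Pw S μ = S_μ S_μ*`. -/
def Pw {n : ℕ} (S : Fin n → A) (μ : List (Fin n)) : A := Sw S μ * star (Sw S μ)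

/-- The set 𝒱_n of finite sums ∑ S_α S_β*. -/
def Vset {n : ℕ} (S : Fin n → A) : Set A :=
  {x | ∃ J : Finset (List (Fin n) × List (Fin n)),
      x = ∑ p ∈ J, Sw S p.1 * star (Sw S p.2)}

/-- The Thompson-like group `S_n = 𝒱_n ∩ U(O_n)`; for n = 2 this is Thompson's group V. -/
def Vgrp {n : ℕ} (S : Fin n → A) : Set A := Vset S ∩ (unitary A : Set A)

/-- The diagonal D_n: closed linear span of the projections P_μ. -/
def Ddiag {n : ℕ} (S : Fin n → A) : Set A :=
  ((Submodule.span ℂ (Set.range (Pw S))).topologicalClosure : Submodule ℂ A)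

/-- Projection: self-adjoint idempotent. -/
def IsProjection (p : A) : Prop := IsSelfAdjoint p ∧ p * p = p

/-- Concatenation ν_1 ν_2 ⋯ ν_k. -/
def wcat {n : ℕ} (ν : ℕ → List (Fin n)) (k : ℕ) : List (Fin n) :=
  ((List.range k).map ν).flatten

/-- Modestly scaling endomorphism. -/
def ModestlyScaling {n : ℕ} (S : Fin n → A) (α : A →⋆ₐ[ℂ] A) : Prop :=
  ∀ ν : ℕ → List (Fin n), (∀ k, ν k ≠ []) →
    ∀ p : A, IsProjection p → (∀ k : ℕ, p ≤ α (Pw S (wcat ν (k + 1)))) → p = 0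

/-- Generator x_0 of Thompson's group F inside U(O_2). -/
def x0 (S : Fin 2 → A) : A :=
  S 0 * S 0 * star (S 0) + S 0 * S 1 * star (S 0) * star (S 1) + S 1 * star (S 1) * star (S 1)

/-- Generators x_k of Thompson's group F inside U(O_2). -/
def xgen (S : Fin 2 → A) : ℕ → A
  | 0 => x0 S
  | k + 1 => 1 - S 1 ^ (k + 1) * star (S 1 ^ (k + 1)) + S 1 ^ (k + 1) * x0 S * star (S 1 ^ (k + 1))

/-- Thompson's group F inside U(O_2): the subgroup generated by the x_k
(as a set: the submonoid generated by the x_k and their adjoints = inverses). -/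
def Fgrp (S : Fin 2 → A) : Set A :=
  (Submonoid.closure (Set.range (xgen S) ∪ star '' Set.range (xgen S)) : Set A)

/-- The extra generator for Thompson's group T. -/
def tgen (S : Fin 2 → A) : A :=
  S 1 * S 1 * star (S 0) + S 0 * star (S 0) * star (S 1) + S 1 * S 0 * star (S 1) * star (S 1)

/-- Thompson's group T inside U(O_2). -/
def Tgrp (S : Fin 2 → A) : Set A :=
  (Submonoid.closure ((Set.range (xgen S) ∪ {tgen S}) ∪
      star '' (Set.range (xgen S) ∪ {tgen S})) : Set A)

/-- `IsOneW S w p`: p is the largest projection in D_n with p w = p, i.e. p = 𝟙_w. -/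
def IsOneW {n : ℕ} (S : Fin n → A) (w p : A) : Prop :=
  p ∈ Ddiag S ∧ IsProjection p ∧ p * w = p ∧
    ∀ p' : A, p' ∈ Ddiag S → IsProjection p' → p' * w = p' → p' ≤ p

/-- min(q) = inf { |μ| : P_μ ≤ q } ∈ ℕ ∪ {∞}. -/
noncomputable def minProj {n : ℕ} (S : Fin n → A) (q : A) : ℕ∞ :=
  ⨅ μ ∈ {μ : List (Fin n) | Pw S μ ≤ q}, (μ.length : ℕ∞)

/-- The core UHF subalgebra F_n: closed linear span of {S_μ S_ν* : |μ| = |ν|}. -/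
def UHF {n : ℕ} (S : Fin n → A) : Set A :=
  ((Submodule.span ℂ {x : A | ∃ μ ν : List (Fin n), μ.length = ν.length ∧
      x = Sw S μ * star (Sw S ν)}).topologicalClosure : Submodule ℂ A)

/-- μ ≺ ν : at the first index where μ and ν differ, the letter of μ is smaller. -/
def WordLt {n : ℕ} (μ ν : List (Fin n)) : Prop :=
  ∃ σ : List (Fin n), ∃ a b : Fin n, a < b ∧ (σ ++ [a]) <+: μ ∧ (σ ++ [b]) <+: ν

/-!
If `u ∈ V`, then every `α(S_μ) = u S_{μ₁} u S_{μ₂} ⋯` is an isometry in `𝒱₂`. For an isometry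
`m ∈ 𝒱₂` and every long enough word `δ`, `m S_δ` is a sum of words `S_ρ` and still an isometry;
compressing by a suitable `P_t` shows that such a sum is a single word. Hence
`m m* = ∑_{|δ| = N} (m S_δ)(m S_δ)*` is a sum of projections `P_ρ`, so `α(P_μ) ∈ D₂` and, by
continuity, `α(D₂) ⊆ D₂`.

Conversely, put `a = α(S₁) = u S₁` and `w = α(S₂) = u S₂`. By hypothesis `v = a w* = α(S₁S₂*)`
and `X = α(x₀)` lie in `𝒱₂`, and the Cuntz relations for `a, w` give `w = v* X v v* + (v* v X)*`;
hence `u = v w S₁* + w S₂*` lies in `𝒱₂`.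
-/

open scoped CStarAlgebra

section CuntzFamily

variable {R R' : Type*} [Ring R] [StarRing R] [Ring R'] [StarRing R'] {n : ℕ}

structure IsCuntzFamily (S : Fin n → R) : Prop where
  star_mul_self : ∀ i, star (S i) * S i = 1
  star_mul_of_ne : ∀ {i j}, i ≠ j → star (S i) * S j = 0
  sum_mul_star : ∑ i, S i * star (S i) = 1

theorem IsCuntzFamily.of_fin_two {S : Fin 2 → R} (hiso : ∀ i, star (S i) * S i = 1)
    (hsum : S 0 * star (S 0) + S 1 * star (S 1) = 1) : IsCuntzFamily S := by
  -- `S i* S j = S i* (S i S i* + S j S j*) S j = 2 • S i* S j`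
  have key : ∀ i j : Fin 2, S i * star (S i) + S j * star (S j) = 1 →
      star (S i) * S j = 0 := by
    intro i j h
    have h2 : star (S i) * S j = star (S i) * S j + star (S i) * S j := by
      conv_lhs => rw [← one_mul (S j), ← h]
      simp only [add_mul, mul_add, ← mul_assoc, hiso, one_mul]
      simp only [mul_assoc, hiso, mul_one]
    exact left_eq_add.mp h2
  refine ⟨hiso, fun {i j} hij => ?_, by rwa [Fin.sum_univ_two]⟩
  fin_cases i <;> fin_cases j
  · exact absurd rfl hij
  · exact key 0 1 hsum
  · exact key 1 0 ((add_comm _ _).trans hsum)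
  · exact absurd rfl hij

theorem IsCuntzFamily.map {F : Type*} [FunLike F R R'] [RingHomClass F R R'] [StarHomClass F R R']
    {S : Fin n → R} (hS : IsCuntzFamily S) (φ : F) : IsCuntzFamily (fun i => φ (S i)) where
  star_mul_self i := by rw [← map_star, ← map_mul, hS.star_mul_self, map_one]
  star_mul_of_ne hij := by rw [← map_star, ← map_mul, hS.star_mul_of_ne hij, map_zero]
  sum_mul_star := by simp_rw [← map_star, ← map_mul, ← map_sum, hS.sum_mul_star, map_one]

theorem IsCuntzFamily.sum_two {S : Fin 2 → R} (hS : IsCuntzFamily S) :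
    S 0 * star (S 0) + S 1 * star (S 1) = 1 := by
  simpa [Fin.sum_univ_two] using hS.sum_mul_star

end CuntzFamily

def words (n : ℕ) : ℕ → Finset (List (Fin n))
  | 0 => {[]}
  | k + 1 => (Finset.univ ×ˢ words n k).image fun p => p.1 :: p.2

theorem mem_words {n k : ℕ} {l : List (Fin n)} : l ∈ words n k ↔ l.length = k := by
  induction k generalizing l with
  | zero => simp [words]
  | succ k ih => cases l <;> simp [words, ih]

theorem sum_words_succ {M : Type*} [AddCommMonoid M] {n : ℕ} (f : List (Fin n) → M) (k : ℕ) :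
    ∑ τ ∈ words n (k + 1), f τ = ∑ i, ∑ t ∈ words n k, f (i :: t) := by
  rw [words, Finset.sum_image fun p _ q _ h => by simpa [Prod.ext_iff] using h,
    Finset.sum_product]

section CuntzAlgebra

variable {A : Type*} [CStarAlgebra A] {n : ℕ} {S : Fin n → A}

@[simp] theorem Sw_nil (S : Fin n → A) : Sw S [] = 1 := rfl

@[simp] theorem Sw_cons (S : Fin n → A) (i : Fin n) (l : List (Fin n)) :
    Sw S (i :: l) = S i * Sw S l := by simp [Sw]

@[simp] theorem Sw_append (S : Fin n → A) (l₁ l₂ : List (Fin n)) :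
    Sw S (l₁ ++ l₂) = Sw S l₁ * Sw S l₂ := by simp [Sw]

theorem Sw_singleton (S : Fin n → A) (i : Fin n) : Sw S [i] = S i := by simp

theorem IsCuntzFamily.star_Sw_mul_Sw_self (hS : IsCuntzFamily S) (μ : List (Fin n)) :
    star (Sw S μ) * Sw S μ = 1 := by
  induction μ with
  | nil => simp
  | cons i l ih =>
    rw [Sw_cons, star_mul, mul_assoc, ← mul_assoc (star (S i)), hS.star_mul_self, one_mul, ih]

theorem IsCuntzFamily.star_Sw_mul_Sw (hS : IsCuntzFamily S) (β γ : List (Fin n)) :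
    star (Sw S β) * Sw S γ =
      if β <+: γ then Sw S (γ.drop β.length)
      else if γ <+: β then star (Sw S (β.drop γ.length)) else 0 := by
  induction β generalizing γ with
  | nil => simp
  | cons b β ih =>
    cases γ with
    | nil => simp
    | cons c γ =>
      rw [Sw_cons, Sw_cons, star_mul, mul_assoc, ← mul_assoc (star (S b))]
      by_cases hbc : b = c
      · subst hbc
        rw [hS.star_mul_self, one_mul, ih γ]
        simp [List.cons_prefix_cons]
      · rw [hS.star_mul_of_ne hbc, zero_mul, mul_zero,
          if_neg fun h => hbc (List.cons_prefix_cons.mp h).1,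
          if_neg fun h => hbc (List.cons_prefix_cons.mp h).1.symm]

theorem IsCuntzFamily.Pw_mul_self (hS : IsCuntzFamily S) (μ : List (Fin n)) :
    Pw S μ * Pw S μ = Pw S μ := by
  rw [Pw, mul_assoc, ← mul_assoc (star (Sw S μ)), hS.star_Sw_mul_Sw_self, one_mul]

theorem star_Pw (S : Fin n → A) (μ : List (Fin n)) : star (Pw S μ) = Pw S μ := by
  simp [Pw]

def Smon (S : Fin n → A) (p : List (Fin n) × List (Fin n)) : A := Sw S p.1 * star (Sw S p.2)

theorem mem_Vset_iff {x : A} : x ∈ Vset S ↔ ∃ J : Finset _, x = ∑ p ∈ J, Smon S p := Iff.rfl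

theorem IsCuntzFamily.Smon_mul (hS : IsCuntzFamily S) (p q : List (Fin n) × List (Fin n)) :
    Smon S p * Smon S q =
      if p.2 <+: q.1 then Smon S (p.1 ++ q.1.drop p.2.length, q.2)
      else if q.1 <+: p.2 then Smon S (p.1, q.2 ++ p.2.drop q.1.length) else 0 := by
  rw [Smon, Smon, mul_assoc, ← mul_assoc (star _), hS.star_Sw_mul_Sw]
  split_ifs
  · simp [Smon, mul_assoc]
  · simp [Smon]
  · simp

theorem IsCuntzFamily.Smon_eq_sum_words (hS : IsCuntzFamily S) (k : ℕ)
    (p : List (Fin n) × List (Fin n)) :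
    Smon S p = ∑ τ ∈ words n k, Smon S (p.1 ++ τ, p.2 ++ τ) := by
  induction k generalizing p with
  | zero => simp [words]
  | succ k ih =>
    have hstep : Smon S p = ∑ i, Smon S (p.1 ++ [i], p.2 ++ [i]) := by
      conv_lhs => rw [Smon, ← mul_one (Sw S p.1), ← hS.sum_mul_star]
      simp only [Smon, Sw_append, Sw_singleton, star_mul, Finset.mul_sum, Finset.sum_mul,
        mul_assoc]
    rw [sum_words_succ, hstep]
    refine Finset.sum_congr rfl fun i _ => ?_
    simp [ih (p.1 ++ [i], p.2 ++ [i])]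

theorem IsCuntzFamily.sum_Pw_words (hS : IsCuntzFamily S) (k : ℕ) :
    ∑ τ ∈ words n k, Pw S τ = 1 := by
  simpa [Smon, Pw] using (hS.Smon_eq_sum_words k ([], [])).symm

theorem Smon_mem_Vset (p : List (Fin n) × List (Fin n)) : Smon S p ∈ Vset S :=
  ⟨{p}, by simp [Smon]⟩

theorem zero_mem_Vset : (0 : A) ∈ Vset S := ⟨∅, by simp⟩

theorem S_mem_Vset (i : Fin n) : S i ∈ Vset S := ⟨{([i], [])}, by simp⟩

theorem star_mem_Vset {x : A} (hx : x ∈ Vset S) : star x ∈ Vset S := by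
  classical
  obtain ⟨J, rfl⟩ := hx
  refine ⟨J.image Prod.swap, ?_⟩
  rw [Finset.sum_image fun _ _ _ _ h => Prod.swap_injective h, star_sum]
  simp

-- Refining `Smon S p` to words longer than any `q.2` in `J` makes its terms disjoint from `J`.
theorem IsCuntzFamily.Smon_add_mem_Vset (hS : IsCuntzFamily S)
    (p : List (Fin n) × List (Fin n)) {y : A} (hy : y ∈ Vset S) : Smon S p + y ∈ Vset S := by
  classical
  obtain ⟨J, rfl⟩ := mem_Vset_iff.mp hy
  set k := J.sup (fun q => q.2.length) + 1
  set F := (words n k).image fun τ => (p.1 ++ τ, p.2 ++ τ)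
  have hF : Smon S p = ∑ q ∈ F, Smon S q := by
    rw [Finset.sum_image fun _ _ _ _ h => List.append_cancel_left (congrArg Prod.fst h)]
    exact hS.Smon_eq_sum_words k p
  have hdisj : Disjoint F J := by
    refine Finset.disjoint_left.mpr fun q hqF hqJ => ?_
    obtain ⟨τ, hτ, rfl⟩ := Finset.mem_image.mp hqF
    have h₁ := Finset.le_sup (f := fun q : List (Fin n) × List (Fin n) => q.2.length) hqJ
    simp only [List.length_append, mem_words.mp hτ] at h₁
    omega
  exact mem_Vset_iff.mpr ⟨F ∪ J, by rw [Finset.sum_union hdisj, ← hF]⟩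

theorem IsCuntzFamily.add_mem_Vset (hS : IsCuntzFamily S) {x y : A} (hx : x ∈ Vset S)
    (hy : y ∈ Vset S) : x + y ∈ Vset S := by
  classical
  obtain ⟨J, rfl⟩ := hx
  induction J using Finset.induction_on with
  | empty => simpa using hy
  | insert p J hp ih =>
    rw [Finset.sum_insert hp, add_assoc]
    exact hS.Smon_add_mem_Vset p ih

theorem IsCuntzFamily.sum_mem_Vset (hS : IsCuntzFamily S) {ι : Type*} (K : Finset ι)
    {f : ι → A} (hf : ∀ i ∈ K, f i ∈ Vset S) : ∑ i ∈ K, f i ∈ Vset S :=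
  Finset.sum_induction f (· ∈ Vset S) (fun _ _ => hS.add_mem_Vset) zero_mem_Vset hf

theorem IsCuntzFamily.mul_mem_Vset (hS : IsCuntzFamily S) {x y : A} (hx : x ∈ Vset S)
    (hy : y ∈ Vset S) : x * y ∈ Vset S := by
  obtain ⟨J, rfl⟩ := mem_Vset_iff.mp hx
  obtain ⟨J', rfl⟩ := mem_Vset_iff.mp hy
  rw [Finset.sum_mul_sum]
  refine hS.sum_mem_Vset _ fun p _ => hS.sum_mem_Vset _ fun q _ => ?_
  rw [hS.Smon_mul]
  split_ifs <;> first | exact Smon_mem_Vset _ | exact zero_mem_Vset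

theorem not_prefix_append_replicate_append {a b : Fin n} (hab : a ≠ b) {σ : List (Fin n)}
    (hσ : σ ≠ []) {T : ℕ} (hT : σ.length ≤ T) :
    ¬ List.replicate T a ++ [b] <+: σ ++ (List.replicate T a ++ [b]) := by
  intro h
  have hlen : 0 < σ.length := List.length_pos_iff.mpr hσ
  have := h.getElem (i := T) (by simp)
  rw [List.getElem_append_right (by simp), List.getElem_append_right (by omega),
    List.getElem_append_left (by simp; omega)] at this
  simp at this
  exact hab this.symm

theorem IsCuntzFamily.Pw_mul_Sw_mul_Pw (hS : IsCuntzFamily S) {a b : Fin n} (hab : a ≠ b)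
    {σ : List (Fin n)} (hσ : σ ≠ []) {T : ℕ} (hT : σ.length ≤ T) :
    Pw S (List.replicate T a ++ [b]) * Sw S σ * Pw S (List.replicate T a ++ [b]) = 0 := by
  set t := List.replicate T a ++ [b]
  have h : star (Sw S t) * Sw S (σ ++ t) = 0 := by
    rw [hS.star_Sw_mul_Sw, if_neg (not_prefix_append_replicate_append hab hσ hT), if_neg]
    intro hpre
    have := hpre.length_le
    simp only [List.length_append] at this
    exact hσ (List.length_eq_zero_iff.mp (by omega))
  calc Pw S t * Sw S σ * Pw S t
        = Sw S t * (star (Sw S t) * Sw S (σ ++ t)) * star (Sw S t) := by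
          simp only [Pw, Sw_append, mul_assoc]
    _ = 0 := by rw [h, mul_zero, zero_mul]

theorem IsCuntzFamily.Pw_mul_star_Sw_mul_Sw_mul_Pw (hS : IsCuntzFamily S) {a b : Fin n}
    (hab : a ≠ b) {T : ℕ} {β γ : List (Fin n)} (hβ : β.length ≤ T) (hγ : γ.length ≤ T) :
    Pw S (List.replicate T a ++ [b]) * (star (Sw S β) * Sw S γ) *
      Pw S (List.replicate T a ++ [b]) =
      if β = γ then Pw S (List.replicate T a ++ [b]) else 0 := by
  split_ifs with hβγ
  · rw [hβγ, hS.star_Sw_mul_Sw_self, mul_one, hS.Pw_mul_self]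
  have hdrop {μ ν : List (Fin n)} (h : μ <+: ν) (hne : μ ≠ ν) : ν.drop μ.length ≠ [] := by
    rw [Ne, List.drop_eq_nil_iff]
    exact fun hle => hne (h.eq_of_length (le_antisymm h.length_le hle))
  rw [hS.star_Sw_mul_Sw]
  split_ifs with h₁ h₂
  · exact hS.Pw_mul_Sw_mul_Pw hab (hdrop h₁ hβγ) (by simp; omega)
  · simpa [star_mul, star_Pw, mul_assoc] using
      congrArg star (hS.Pw_mul_Sw_mul_Pw hab (hdrop h₂ (Ne.symm hβγ)) (by simp; omega))
  · simp

-- Compressing by `P = Pw S (aᵀ b)` kills `S_σ` and `S_σ*` for `0 < |σ| ≤ T`, so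
-- `P x* x P = N • P` with `N` the number of pairs of equal words in `x`; `x* x = 1` forces `N = 1`.
theorem IsCuntzFamily.exists_eq_Sw_of_sum_Sw [Nontrivial (Fin n)] (hS : IsCuntzFamily S)
    {ι : Type*} (K : Finset ι) (g : ι → List (Fin n))
    (h : star (∑ i ∈ K, Sw S (g i)) * ∑ i ∈ K, Sw S (g i) = 1) :
    ∃ ρ, ∑ i ∈ K, Sw S (g i) = Sw S ρ := by
  classical
  obtain _ | _ := subsingleton_or_nontrivial A
  · exact ⟨[], Subsingleton.elim _ _⟩
  obtain ⟨a, b, hab⟩ := exists_pair_ne (Fin n)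
  set T := K.sup fun i => (g i).length
  set t := List.replicate T a ++ [b]
  set P := Pw S t
  have hP : P ≠ 0 := by
    intro hP
    have : star (Sw S t) * P * Sw S t = 1 := by
      simp only [P, Pw, ← mul_assoc, hS.star_Sw_mul_Sw_self, one_mul]
    simp [hP] at this
  set N := ∑ i ∈ K, ∑ j ∈ K, if g i = g j then 1 else 0
  have hN : N • P = P := by
    calc N • P = ∑ i ∈ K, ∑ j ∈ K, P * (star (Sw S (g i)) * Sw S (g j)) * P := by
          simp only [N, Finset.sum_smul, ite_smul, one_smul, zero_smul]
          refine Finset.sum_congr rfl fun i hi => Finset.sum_congr rfl fun j hj => ?_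
          exact (hS.Pw_mul_star_Sw_mul_Sw_mul_Pw hab
            (Finset.le_sup (f := fun i => (g i).length) hi)
            (Finset.le_sup (f := fun i => (g i).length) hj)).symm
      _ = P * (star (∑ i ∈ K, Sw S (g i)) * ∑ i ∈ K, Sw S (g i)) * P := by
          simp only [star_sum, Finset.mul_sum, Finset.sum_mul]
          exact Finset.sum_comm
      _ = P := by rw [h, mul_one, hS.Pw_mul_self]
  have hN₁ : N = 1 := by
    have : (N : ℂ) • P = (1 : ℂ) • P := by rw [Nat.cast_smul_eq_nsmul, hN, one_smul]
    exact_mod_cast smul_left_injective ℂ hP this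
  have hcard : K.card ≤ 1 := by
    rw [← hN₁, Finset.card_eq_sum_ones]
    exact Finset.sum_le_sum fun i hi => (by simp : 1 ≤ if g i = g i then 1 else 0).trans
      (Finset.single_le_sum (f := fun j => if g i = g j then 1 else 0) (by simp) hi)
  obtain hK | hK := Nat.le_one_iff_eq_zero_or_eq_one.mp hcard
  · simp [Finset.card_eq_zero.mp hK] at h
  · obtain ⟨i, rfl⟩ := Finset.card_eq_one.mp hK
    exact ⟨g i, Finset.sum_singleton _ _⟩

theorem IsCuntzFamily.Smon_mul_Sw (hS : IsCuntzFamily S) (p : List (Fin n) × List (Fin n))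
    {δ : List (Fin n)} (hδ : p.2.length ≤ δ.length) :
    Smon S p * Sw S δ = if p.2 <+: δ then Sw S (p.1 ++ δ.drop p.2.length) else 0 := by
  rw [Smon, mul_assoc, hS.star_Sw_mul_Sw]
  split_ifs with h₁ h₂
  · simp
  · exact absurd (h₂.eq_of_length (le_antisymm h₂.length_le hδ) ▸ List.prefix_refl _) h₁
  · simp

-- `m S_δ` is a sum of words for every long enough `δ`, and an isometry, hence a single word.
theorem IsCuntzFamily.mul_star_mem_span_Pw [Nontrivial (Fin n)] (hS : IsCuntzFamily S) {m : A}
    (hm : m ∈ Vset S) (hm₁ : star m * m = 1) :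
    m * star m ∈ Submodule.span ℂ (Set.range (Pw S)) := by
  classical
  obtain ⟨J, hJ⟩ := mem_Vset_iff.mp hm
  set N := J.sup fun p => p.2.length
  have hword : ∀ δ ∈ words n N, ∃ ρ, m * Sw S δ = Sw S ρ := by
    intro δ hδ
    have hexp : m * Sw S δ =
        ∑ p ∈ J.filter (·.2 <+: δ), Sw S (p.1 ++ δ.drop p.2.length) := by
      rw [Finset.sum_filter, hJ, Finset.sum_mul]
      refine Finset.sum_congr rfl fun p hp => hS.Smon_mul_Sw p ?_
      rw [mem_words.mp hδ]
      exact Finset.le_sup (f := fun p => p.2.length) hp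
    rw [hexp]
    refine hS.exists_eq_Sw_of_sum_Sw _ _ ?_
    rw [← hexp, star_mul, mul_assoc, ← mul_assoc (star m), hm₁, one_mul,
      hS.star_Sw_mul_Sw_self]
  have hsplit : m * star m = ∑ δ ∈ words n N, m * Sw S δ * star (m * Sw S δ) := by
    calc m * star m = m * (∑ δ ∈ words n N, Pw S δ) * star m := by
          rw [hS.sum_Pw_words, mul_one]
      _ = _ := by simp only [Pw, Finset.mul_sum, Finset.sum_mul, star_mul, mul_assoc]
  rw [hsplit]
  refine Submodule.sum_mem _ fun δ hδ => ?_
  obtain ⟨ρ, hρ⟩ := hword δ hδ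
  rw [hρ]
  exact Submodule.subset_span ⟨ρ, rfl⟩

theorem IsCuntzFamily.map_mem_Ddiag [Nontrivial (Fin n)] (hS : IsCuntzFamily S)
    (α : A →⋆ₐ[ℂ] A) (hα : ∀ i, α (S i) ∈ Vset S) {x : A} (hx : x ∈ Ddiag S) :
    α x ∈ Ddiag S := by
  set D := Submodule.span ℂ (Set.range (Pw S))
  have hSw (μ : List (Fin n)) : α (Sw S μ) ∈ Vset S := by
    induction μ with
    | nil => exact ⟨{([], [])}, by simp⟩
    | cons i μ ih => simpa using hS.mul_mem_Vset (hα i) ih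
  have hD : D ≤ D.topologicalClosure.comap (α : A →ₐ[ℂ] A).toLinearMap := by
    refine Submodule.span_le.mpr ?_
    rintro _ ⟨μ, rfl⟩
    refine D.le_topologicalClosure ?_
    have := hS.mul_star_mem_span_Pw (hSw μ)
      (by rw [← map_star, ← map_mul, hS.star_Sw_mul_Sw_self, map_one])
    rwa [← map_star, ← map_mul] at this
  exact D.topologicalClosure_minimal hD
    (D.isClosed_topologicalClosure.preimage (map_continuous α)) hx

theorem map_x0 (α : A →⋆ₐ[ℂ] A) (S : Fin 2 → A) : α (x0 S) = x0 (fun i => α (S i)) := by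
  simp [x0, map_star]

theorem IsCuntzFamily.apply_one_eq {T : Fin 2 → A} (hT : IsCuntzFamily T) :
    T 1 = star (T 0 * star (T 1)) * x0 T * (T 0 * star (T 1) * star (T 0 * star (T 1))) +
      star (star (T 0 * star (T 1)) * (T 0 * star (T 1)) * x0 T) := by
  have c (i j : Fin 2) (x : A) : star (T i) * (T j * x) = if i = j then x else 0 := by
    split_ifs with h
    · rw [← mul_assoc, h, hT.star_mul_self, one_mul]
    · rw [← mul_assoc, hT.star_mul_of_ne h, zero_mul]
  calc T 1 = T 1 * (T 0 * star (T 0)) + T 1 * (T 1 * star (T 1)) := by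
        rw [← mul_add, hT.sum_two, mul_one]
    _ = _ := by
        simp [x0, star_mul, mul_add, add_mul, mul_assoc, c]

theorem IsCuntzFamily.mem_Vset_of_map_x0 {S : Fin 2 → A} (hS : IsCuntzFamily S) {u : A}
    (α : A →⋆ₐ[ℂ] A) (hα : ∀ i, α (S i) = u * S i) (hx0 : α (x0 S) ∈ Vset S)
    (hv : α (S 0 * star (S 1)) ∈ Vset S) : u ∈ Vset S := by
  set T := fun i => α (S i)
  have hT : IsCuntzFamily T := hS.map α
  rw [map_x0] at hx0
  rw [map_mul, map_star] at hv
  have hT₁ : T 1 ∈ Vset S := by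
    rw [hT.apply_one_eq]
    exact hS.add_mem_Vset
      (hS.mul_mem_Vset (hS.mul_mem_Vset (star_mem_Vset hv) hx0)
        (hS.mul_mem_Vset hv (star_mem_Vset hv)))
      (star_mem_Vset (hS.mul_mem_Vset (hS.mul_mem_Vset (star_mem_Vset hv) hv) hx0))
  have hu : u = T 0 * star (T 1) * T 1 * star (S 0) + T 1 * star (S 1) := by
    rw [mul_assoc (T 0), hT.star_mul_self, mul_one]
    simp only [T, hα, mul_assoc, ← mul_add, hS.sum_two, mul_one]
  rw [hu]
  exact hS.add_mem_Vset (hS.mul_mem_Vset (hS.mul_mem_Vset hv hT₁) (star_mem_Vset (S_mem_Vset 0)))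
    (hS.mul_mem_Vset hT₁ (star_mem_Vset (S_mem_Vset 1)))

end CuntzAlgebra

theorem stmt_17_general {A : Type*} [CStarAlgebra A] [PartialOrder A] [StarOrderedRing A]
    (S : Fin 2 → A)
    (hiso : ∀ i, star (S i) * S i = 1)
    (hsum : S 0 * star (S 0) + S 1 * star (S 1) = 1)
    (u : A) (hu : u ∈ unitary A)
    (α : A →⋆ₐ[ℂ] A) (hα : ∀ i, α (S i) = u * S i)
    (hF : ∀ w ∈ Fgrp S, α w ∈ Vgrp S) :
    u ∈ Vgrp S ↔
      (∀ x ∈ Ddiag S, α x ∈ Ddiag S) ∧ α (S 0 * star (S 1)) ∈ Vset S := by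
  have hS : IsCuntzFamily S := .of_fin_two hiso hsum
  constructor
  · rintro ⟨huV, -⟩
    have hαS (i : Fin 2) : α (S i) ∈ Vset S := hα i ▸ hS.mul_mem_Vset huV (S_mem_Vset i)
    refine ⟨fun x hx => hS.map_mem_Ddiag α hαS hx, ?_⟩
    rw [map_mul, map_star]
    exact hS.mul_mem_Vset (hαS 0) (star_mem_Vset (hαS 1))
  · rintro ⟨-, hv⟩
    have hx0 : x0 S ∈ Fgrp S := Submonoid.subset_closure (Or.inl ⟨0, rfl⟩)
    exact ⟨hS.mem_Vset_of_map_x0 α hα (hF _ hx0).1 hv, hu⟩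

theorem stmt_17 {A : Type*} [CStarAlgebra A] [PartialOrder A] [StarOrderedRing A]
    (S : Fin 2 → A)
    (hiso : ∀ i, star (S i) * S i = 1)
    (hsum : S 0 * star (S 0) + S 1 * star (S 1) = 1)
    (hgen : (StarAlgebra.adjoin ℂ (Set.range S)).topologicalClosure = ⊤)
    (u : A) (hu : u ∈ unitary A)
    (α : A →⋆ₐ[ℂ] A) (hα : ∀ i, α (S i) = u * S i)
    (hF : ∀ w ∈ Fgrp S, α w ∈ Vgrp S) :
    u ∈ Vgrp S ↔
      (∀ x ∈ Ddiag S, α x ∈ Ddiag S) ∧ α (S 0 * star (S 1)) ∈ Vset S :=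
  stmt_17_general S hiso hsum u hu α hα hF
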